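/- arXiv:1502.04604 — 3 statements merged into one kernel-verified Lean document; each statement's English description precedes it below -/
import Mathlib

section
/- Let n ≥ 1 and let x = (x_1,…,x_n) ∈ ℝ^n satisfy 1 > x_1 > x_2 > … > x_n > 0 (i.e., x lies in the interior of the fundamental domain F(S̃_n^aff)). Then cos⁻_{ρ₁}(x) ≠ 0, cos⁻_{ρ₂}(x) ≠ 0, and cos⁺_ρ(x) ≠ 0. -/
open Real Finset

/-- The antisymmetric multivariate cosine function
`cos⁻_λ(x) = Σ_{σ ∈ S_n} sgn(σ) ∏_{i=1}^n cos(π λ_{σ(i)} x_i)`. -/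
noncomputable def cosMinus (n : ℕ) (lam x : Fin n → ℝ) : ℝ :=
  ∑ σ : Equiv.Perm (Fin n),
    ((Equiv.Perm.sign σ : ℤ) : ℝ) * ∏ i : Fin n, Real.cos (Real.pi * lam (σ i) * x i)

/-- The symmetric multivariate cosine function
`cos⁺_λ(x) = Σ_{σ ∈ S_n} ∏_{i=1}^n cos(π λ_{σ(i)} x_i)`. -/
noncomputable def cosPlus (n : ℕ) (lam x : Fin n → ℝ) : ℝ :=
  ∑ σ : Equiv.Perm (Fin n), ∏ i : Fin n, Real.cos (Real.pi * lam (σ i) * x i)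

/-!
Writing `cos⁻_λ(x)` as the determinant `det (cos (π λ_j x_i))`, the entries for `λ = ρ₁`
and `λ = ρ₂` are polynomials of degrees `0, …, n - 1` (Chebyshev polynomials of the first and
third kind) in `y_i = cos (π x_i)`, up to the positive row factors `cos (π x_i / 2)` for `ρ₂`.
Such a determinant is a nonzero multiple of the Vandermonde determinant of the `y_i`, which
are distinct because `cos` is injective on `[0, π]`. Finally
`cos⁺_ρ(x) = n! ∏ cos (π x_i / 2) > 0`.
-/

open Polynomial Polynomial.Chebyshev
open scoped Nat

namespace Polynomial.Chebyshev

variable (R : Type*) [CommRing R]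

/-- Chebyshev polynomials of the third kind. -/
noncomputable def V (n : ℕ) : R[X] := U R n - U R (n - 1 : ℤ)

theorem degree_V [IsDomain R] [NeZero (2 : R)] (n : ℕ) : (V R n).degree = n := by
  refine (degree_sub_eq_left_of_degree_lt ?_).trans (degree_U_natCast R n)
  rw [degree_U_natCast]
  cases n with
  | zero => simp
  | succ k =>
    rw [Nat.cast_succ, add_sub_cancel_right, degree_U_natCast]
    exact_mod_cast k.lt_succ_self

theorem V_real_cos (θ : ℝ) (n : ℕ) :
    cos (θ / 2) * (V ℝ n).eval (cos θ) = cos ((n + 1 / 2) * θ) := by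
  have hU : (U ℝ (n - 1 : ℤ)).eval (cos θ) * sin θ = sin (n * θ) := by
    rw [U_real_cos]; push_cast; ring_nf
  have hV : V ℝ n = T ℝ n + (X - 1) * U ℝ (n - 1 : ℤ) := by
    rw [V, T_eq_U_sub_X_mul_U]; ring
  rw [hV, eval_add, eval_mul, eval_sub, eval_X, eval_one, T_real_cos]
  obtain ⟨a, rfl⟩ : ∃ a, θ = 2 * a := ⟨θ / 2, by ring⟩
  rw [Int.cast_natCast, mul_div_cancel_left₀ a two_ne_zero,
    show (n + 1 / 2) * (2 * a) = n * (2 * a) + a by ring, cos_add, ← hU]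
  generalize eval (cos (2 * a)) (U ℝ (n - 1 : ℤ)) = u
  rw [cos_two_mul, sin_two_mul]
  linear_combination (2 * cos a * u) * sin_sq_add_cos_sq a

end Polynomial.Chebyshev

theorem Matrix.det_eval_perm_ne_zero {R : Type*} [CommRing R] [IsDomain R] {n : ℕ}
    {v : Fin n → R} (hv : Function.Injective v) {p : Fin n → R[X]}
    (hp : ∀ j, (p j).degree = (j : ℕ)) (σ : Equiv.Perm (Fin n)) :
    (Matrix.of fun i j => (p (σ j)).eval (v i)).det ≠ 0 := by
  have hdeg j : (p j).natDegree ≤ j := (natDegree_eq_of_degree_eq_some (hp j)).le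
  change ((Matrix.of fun i j => (p j).eval (v i)).submatrix id σ).det ≠ 0
  rw [Matrix.det_permute',
    eval_matrixOfPolynomials_eq_vandermonde_mul_matrixOfPolynomials v p hdeg, Matrix.det_mul,
    Matrix.det_of_isUpperTriangular (Matrix.matrixOfPolynomials_blockTriangular p hdeg)]
  have hsign : ((Equiv.Perm.sign σ : ℤ) : R) ≠ 0 := by
    rcases Int.units_eq_one_or (Equiv.Perm.sign σ) with h | h <;> simp [h]
  refine mul_ne_zero hsign (mul_ne_zero (Matrix.det_vandermonde_ne_zero_iff.2 hv) ?_)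
  refine prod_ne_zero_iff.2 fun j _ => ?_
  have hne : p j ≠ 0 := fun h => by simpa [h] using hp j
  rw [Matrix.of_apply, ← natDegree_eq_of_degree_eq_some (hp j)]
  exact leadingCoeff_ne_zero.2 hne

theorem Real.injective_cos_pi_mul {ι : Type*} {x : ι → ℝ} (hx : Function.Injective x)
    (h01 : ∀ i, x i ∈ Set.Icc 0 1) : Function.Injective fun i => cos (π * x i) := by
  have hmem i : π * x i ∈ Set.Icc 0 π :=
    ⟨mul_nonneg pi_pos.le (h01 i).1, mul_le_of_le_one_right pi_pos.le (h01 i).2⟩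
  exact fun i j h => hx (mul_left_cancel₀ pi_ne_zero (injOn_cos (hmem i) (hmem j) h))

theorem cosMinus_eq_det (n : ℕ) (lam x : Fin n → ℝ) :
    cosMinus n lam x = (Matrix.of fun i j => cos (π * lam j * x i)).det := by
  rw [← Matrix.det_transpose, Matrix.det_apply']
  rfl

theorem cosMinus_rho₁_eq_det (n : ℕ) (x : Fin n → ℝ) :
    cosMinus n (fun i => (n : ℝ) - 1 - ((i : ℕ) : ℝ)) x =
      (Matrix.of fun i j => (T ℝ (j.rev : ℕ)).eval (cos (π * x i))).det := by
  rw [cosMinus_eq_det]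
  congr 1
  ext i j
  rw [Matrix.of_apply, Matrix.of_apply, T_real_cos, Fin.val_rev]
  push_cast [Nat.cast_sub j.isLt]
  ring_nf

theorem cosMinus_rho₂_eq_prod_mul_det (n : ℕ) (x : Fin n → ℝ) :
    cosMinus n (fun i => (n : ℝ) - ((i : ℕ) : ℝ) - 1 / 2) x =
      (∏ i, cos (π * x i / 2)) *
        (Matrix.of fun i j => (V ℝ (j.rev : ℕ)).eval (cos (π * x i))).det := by
  rw [cosMinus_eq_det, ← Matrix.det_mul_column]
  congr 1
  ext i j
  rw [Matrix.of_apply, Matrix.of_apply, Matrix.of_apply, V_real_cos, Fin.val_rev]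
  push_cast [Nat.cast_sub j.isLt]
  ring_nf

theorem cosPlus_const (n : ℕ) (c : ℝ) (x : Fin n → ℝ) :
    cosPlus n (fun _ => c) x = n ! * ∏ i, cos (π * c * x i) := by
  rw [cosPlus, sum_const, card_univ, Fintype.card_perm, Fintype.card_fin, nsmul_eq_mul]

theorem nonzero_in_interior (n : ℕ) (hn : 1 ≤ n) (x : Fin n → ℝ)
    (h1 : x ⟨0, hn⟩ < 1)
    (hdec : ∀ i j : Fin n, i < j → x j < x i)
    (hpos : 0 < x ⟨n - 1, Nat.sub_lt hn Nat.one_pos⟩) :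
    cosMinus n (fun i => (n : ℝ) - 1 - ((i : ℕ) : ℝ)) x ≠ 0 ∧
    cosMinus n (fun i => (n : ℝ) - ((i : ℕ) : ℝ) - 1 / 2) x ≠ 0 ∧
    cosPlus n (fun _ => (1 : ℝ) / 2) x ≠ 0 := by
  have hanti : StrictAnti x := fun i j hij => hdec i j hij
  have hx i : x i ∈ Set.Ioo 0 1 :=
    ⟨hpos.trans_le (hanti.antitone (Fin.le_def.2 (Nat.le_sub_one_of_lt i.isLt))),
      (hanti.antitone (Fin.le_def.2 (Nat.zero_le _))).trans_lt h1⟩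
  have hv := injective_cos_pi_mul hanti.injective fun i => Set.Ioo_subset_Icc_self (hx i)
  have hcos i : 0 < cos (π * x i / 2) :=
    cos_pos_of_mem_Ioo ⟨by nlinarith [(hx i).1, pi_pos], by nlinarith [(hx i).2, pi_pos]⟩
  refine ⟨?_, ?_, ?_⟩
  · rw [cosMinus_rho₁_eq_det]
    exact Matrix.det_eval_perm_ne_zero (p := fun j => T ℝ (j : ℕ)) hv (fun j => by simp)
      Fin.revPerm
  · rw [cosMinus_rho₂_eq_prod_mul_det]
    exact mul_ne_zero (prod_ne_zero_iff.2 fun i _ => (hcos i).ne')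
      (Matrix.det_eval_perm_ne_zero hv (fun j => degree_V ℝ j) Fin.revPerm)
  · rw [cosPlus_const]
    refine (mul_pos (by positivity) (prod_pos fun i _ => ?_)).ne'
    rw [show π * (1 / 2) * x i = π * x i / 2 by ring]
    exact hcos i
end

section
/- Let n ≥ 1 and let k, k' ∈ P^{++}, i.e., k = (k_1,…,k_n) and k' = (k'_1,…,k'_n) are integer vectors with k_1 > k_2 > … > k_n ≥ 0 and k'_1 > k'_2 > … > k'_n ≥ 0. Then ∫_{F(S̃_n^aff)} cos⁻_{k+ρ}(x) cos⁻_{k'+ρ}(x) dx = 2^{−n} · δ_{k,k'}, where ρ = (1/2,…,1/2) and dx is n-dimensional Lebesgue measure. -/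
/-!
Each `cos⁻_λ` is antisymmetric under permutations of the coordinates, so the product of two of
them is symmetric. The images of `F` under the coordinate permutations tile the unit cube up to
the null set of points with two equal coordinates, hence the integral over the cube is `n!` times
the integral over `F`. On the cube, expanding both alternating sums makes every term a product of
one-dimensional integrals `∫₀¹ cos(π(a+½)t) cos(π(b+½)t) dt = δ_{ab}/2`, and the term indexed by
`(σ, τ)` survives only if `k ∘ σ = k' ∘ τ`, which for strictly decreasing `k`, `k'` forces
`σ = τ` and `k = k'`: exactly `n!` terms of value `2⁻ⁿ` remain.
-/

open Real Finset MeasureTheory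

/-- The fundamental domain `F(S̃_n^aff) = {x ∈ ℝ^n : 1 ≥ x_1 ≥ x_2 ≥ … ≥ x_n ≥ 0}`. -/
def Fdom (n : ℕ) : Set (Fin n → ℝ) :=
  {x | (∀ i j : Fin n, i ≤ j → x j ≤ x i) ∧ ∀ i : Fin n, 0 ≤ x i ∧ x i ≤ 1}

lemma Int.cast_units_mul_self {R : Type*} [Ring R] (u : ℤˣ) : ((u : ℤ) : R) * (u : ℤ) = 1 := by
  rw [← Int.cast_mul, ← Units.val_mul, Int.units_mul_self, Units.val_one, Int.cast_one]

lemma integral_cos_int_mul_pi (m : ℤ) :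
    ∫ t in (0 : ℝ)..1, Real.cos (m * π * t) = if m = 0 then 1 else 0 := by
  split_ifs with hm
  · simp [hm]
  · have hc : (m : ℝ) * π ≠ 0 := mul_ne_zero (Int.cast_ne_zero.mpr hm) pi_ne_zero
    simp [intervalIntegral.integral_comp_mul_left Real.cos hc, integral_cos, sin_int_mul_pi]

lemma integral_cos_halfInt_mul_cos_halfInt (a b : ℕ) :
    ∫ t in Set.Icc (0 : ℝ) 1,
        Real.cos (π * ((a : ℝ) + 1 / 2) * t) * Real.cos (π * ((b : ℝ) + 1 / 2) * t)
      = if a = b then 2⁻¹ else 0 := by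
  have product_to_sum : ∀ t : ℝ,
      Real.cos (π * ((a : ℝ) + 1 / 2) * t) * Real.cos (π * ((b : ℝ) + 1 / 2) * t)
        = (Real.cos (((a - b : ℤ) : ℝ) * π * t) +
            Real.cos (((a + b + 1 : ℤ) : ℝ) * π * t)) / 2 := by
    intro t
    rw [eq_div_iff two_ne_zero, mul_comm, ← mul_assoc, two_mul_cos_mul_cos]
    push_cast
    ring_nf
  have hint : ∀ m : ℤ, IntervalIntegrable (fun t => Real.cos (m * π * t)) volume 0 1 :=
    fun m => (by fun_prop : Continuous fun t : ℝ => Real.cos (m * π * t)).intervalIntegrable 0 1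
  rw [integral_Icc_eq_integral_Ioc, ← intervalIntegral.integral_of_le zero_le_one]
  simp_rw [product_to_sum]
  rw [intervalIntegral.integral_div, intervalIntegral.integral_add (hint _) (hint _),
    integral_cos_int_mul_pi, integral_cos_int_mul_pi, if_neg (by omega : (a : ℤ) + b + 1 ≠ 0)]
  by_cases hab : a = b <;> simp [hab, sub_eq_zero]

lemma volume_setOf_apply_eq_apply {ι : Type*} [Fintype ι] {i j : ι} (hij : i ≠ j) :
    volume {x : ι → ℝ | x i = x j} = 0 := by
  let s : Submodule ℝ (ι → ℝ) :=
    LinearMap.ker (LinearMap.proj (R := ℝ) (φ := fun _ : ι => ℝ) i - LinearMap.proj j)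
  have hs : s ≠ ⊤ := by
    classical
    intro h
    have : Pi.single i (1 : ℝ) ∈ s := h ▸ Submodule.mem_top
    simp [s, hij.symm] at this
  have hset : {x : ι → ℝ | x i = x j} = s := by
    ext x
    simp [s, sub_eq_zero]
  rw [hset]
  exact Measure.addHaar_submodule volume s hs

lemma ae_injective {ι : Type*} [Fintype ι] : ∀ᵐ x : ι → ℝ, Function.Injective x := by
  have : {x : ι → ℝ | ¬ Function.Injective x} = ⋃ (i) (j) (_ : i ≠ j), {x | x i = x j} := by
    ext x
    simp only [Set.mem_ofPred_eq, Function.Injective, Set.mem_iUnion]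
    grind
  rw [ae_iff, this]
  exact measure_iUnion_null fun i => measure_iUnion_null fun j =>
    measure_iUnion_null fun hij => volume_setOf_apply_eq_apply hij

def unitCube (ι : Type*) : Set (ι → ℝ) := Set.univ.pi fun _ => Set.Icc 0 1

lemma Continuous.integrableOn_unitCube {ι : Type*} [Fintype ι] {f : (ι → ℝ) → ℝ}
    (hf : Continuous f) : IntegrableOn f (unitCube ι) :=
  hf.continuousOn.integrableOn_compact (isCompact_univ_pi fun _ => isCompact_Icc)

lemma integral_unitCube_prod {ι : Type*} [Fintype ι] (g : ι → ℝ → ℝ) :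
    ∫ x in unitCube ι, ∏ i, g i (x i) = ∏ i, ∫ t in Set.Icc (0 : ℝ) 1, g i t := by
  rw [unitCube, volume_pi, Measure.restrict_pi_pi, integral_fintype_prod_eq_prod]

lemma MeasurableEquiv.coe_piCongrLeft_perm_symm {ι : Type*} (σ : Equiv.Perm ι) :
    ⇑(MeasurableEquiv.piCongrLeft (fun _ : ι => ℝ) σ.symm) = fun x => x ∘ σ := by
  ext x i
  simp [MeasurableEquiv.coe_piCongrLeft, Equiv.piCongrLeft_apply_eq_cast]

lemma eq_of_antitone_comp_perm {α : Type*} [PartialOrder α] {n : ℕ} {x : Fin n → α}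
    (hx : Function.Injective x) {σ τ : Equiv.Perm (Fin n)}
    (hσ : Antitone (x ∘ σ)) (hτ : Antitone (x ∘ τ)) : σ = τ :=
  Equiv.ext fun i => hx <| congrFun (Tuple.unique_monotone (f := OrderDual.toDual ∘ x)
    hσ.dual_right hτ.dual_right) i

lemma StrictAnti.comp_perm_eq_comp_perm_iff {α : Type*} [LinearOrder α] {n : ℕ}
    {f g : Fin n → α} (hf : StrictAnti f) (hg : StrictAnti g) {σ τ : Equiv.Perm (Fin n)} :
    f ∘ σ = g ∘ τ ↔ σ = τ ∧ f = g := by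
  refine ⟨fun h => ?_, fun ⟨hστ, hfg⟩ => hστ ▸ hfg ▸ rfl⟩
  have hgf : g ∘ (τ * σ⁻¹ : Equiv.Perm (Fin n)) = f := by
    ext i; simpa using (congrFun h (σ⁻¹ i)).symm
  have hτσ : τ * σ⁻¹ = 1 :=
    eq_of_antitone_comp_perm hg.injective (hgf ▸ hf.antitone) hg.antitone
  obtain rfl : τ = σ := by simpa [mul_inv_eq_one] using hτσ
  exact ⟨rfl, by simpa using hgf.symm⟩

lemma measurableSet_Fdom (n : ℕ) : MeasurableSet (Fdom n) := by
  simp only [Fdom, Set.ofPred_and, Set.ofPred_forall]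
  measurability

lemma iUnion_preimage_comp_perm_Fdom (n : ℕ) :
    ⋃ σ : Equiv.Perm (Fin n), (fun x => x ∘ σ) ⁻¹' Fdom n = unitCube (Fin n) := by
  ext x
  simp only [unitCube, Set.mem_iUnion, Set.mem_preimage, Set.mem_univ_pi]
  constructor
  · rintro ⟨σ, -, hσ⟩ i
    simpa using hσ (σ⁻¹ i)
  · intro hx
    refine ⟨Fin.revPerm.trans (Tuple.sort x), ?_, fun i => hx _⟩
    exact (Tuple.monotone_sort x).comp_antitone Fin.rev_anti

lemma aedisjoint_preimage_comp_perm_Fdom (n : ℕ) :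
    Pairwise (Function.onFun (AEDisjoint volume)
      fun σ : Equiv.Perm (Fin n) => (fun x : Fin n → ℝ => x ∘ σ) ⁻¹' Fdom n) := by
  intro σ τ hστ
  refine measure_mono_null ?_ (ae_iff.mp ae_injective)
  intro x hx hinj
  exact hστ (eq_of_antitone_comp_perm hinj hx.1.1 hx.2.1)

lemma integral_unitCube_eq_factorial_mul_integral_Fdom {n : ℕ} {f : (Fin n → ℝ) → ℝ}
    (hf : IntegrableOn f (unitCube (Fin n)))
    (hsymm : ∀ (σ : Equiv.Perm (Fin n)) x, f (x ∘ σ) = f x) :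
    ∫ x in unitCube (Fin n), f x = n.factorial * ∫ x in Fdom n, f x := by
  have hpiece : ∀ σ : Equiv.Perm (Fin n),
      ∫ x in (fun x => x ∘ σ) ⁻¹' Fdom n, f x = ∫ x in Fdom n, f x := fun σ => by
    simpa [MeasurableEquiv.coe_piCongrLeft_perm_symm, hsymm] using
      (volume_measurePreserving_piCongrLeft _ σ.symm).setIntegral_preimage_emb
        (MeasurableEquiv.measurableEmbedding _) f (Fdom n)
  rw [← iUnion_preimage_comp_perm_Fdom, integral_iUnion_ae
      (fun σ => ((measurableSet_Fdom n).preimage (by fun_prop)).nullMeasurableSet)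
      (aedisjoint_preimage_comp_perm_Fdom n) (by rwa [iUnion_preimage_comp_perm_Fdom]),
    tsum_fintype]
  simp [hpiece, Fintype.card_perm]

@[fun_prop]
lemma continuous_cosMinus (n : ℕ) (lam : Fin n → ℝ) : Continuous (cosMinus n lam) := by
  unfold cosMinus
  fun_prop

lemma cosMinus_comp_perm (n : ℕ) (lam x : Fin n → ℝ) (σ : Equiv.Perm (Fin n)) :
    cosMinus n lam (x ∘ σ) = (Equiv.Perm.sign σ : ℤ) * cosMinus n lam x := by
  unfold cosMinus
  rw [mul_sum]
  refine Fintype.sum_equiv (Equiv.mulRight σ⁻¹) _ _ fun τ => ?_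
  rw [← Equiv.prod_comp σ⁻¹]
  simp only [Equiv.coe_mulRight, Equiv.Perm.sign_mul, Equiv.Perm.sign_inv, Units.val_mul,
    Int.cast_mul, Function.comp_apply, Equiv.Perm.mul_apply, Equiv.Perm.coe_inv,
    Equiv.apply_symm_apply]
  rw [mul_comm (_ : ℝ) ((Equiv.Perm.sign σ : ℤ) : ℝ), ← mul_assoc, ← mul_assoc,
    Int.cast_units_mul_self, one_mul]

lemma cosMinus_mul_cosMinus_comp_perm (n : ℕ) (lam lam' : Fin n → ℝ) (σ : Equiv.Perm (Fin n))
    (x : Fin n → ℝ) :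
    cosMinus n lam (x ∘ σ) * cosMinus n lam' (x ∘ σ) = cosMinus n lam x * cosMinus n lam' x := by
  rw [cosMinus_comp_perm, cosMinus_comp_perm]
  linear_combination (cosMinus n lam x * cosMinus n lam' x) *
    Int.cast_units_mul_self (R := ℝ) (Equiv.Perm.sign σ)

lemma integral_unitCube_cosMinus_mul_cosMinus (n : ℕ) (lam lam' : Fin n → ℝ) :
    ∫ x in unitCube (Fin n), cosMinus n lam x * cosMinus n lam' x
      = ∑ σ : Equiv.Perm (Fin n), ∑ τ : Equiv.Perm (Fin n),
          ((Equiv.Perm.sign σ : ℤ) : ℝ) * (Equiv.Perm.sign τ : ℤ) *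
            ∏ i, ∫ t in Set.Icc (0 : ℝ) 1,
              Real.cos (π * lam (σ i) * t) * Real.cos (π * lam' (τ i) * t) := by
  simp only [cosMinus, sum_mul_sum]
  rw [integral_finsetSum _ fun σ _ => Continuous.integrableOn_unitCube (by fun_prop)]
  refine sum_congr rfl fun σ _ => ?_
  rw [integral_finsetSum _ fun τ _ => Continuous.integrableOn_unitCube (by fun_prop)]
  refine sum_congr rfl fun τ _ => ?_
  rw [← integral_unitCube_prod, ← integral_const_mul]
  congr with x
  rw [prod_mul_distrib]
  ring

lemma integral_unitCube_cosMinus_halfInt_mul_cosMinus_halfInt {n : ℕ} {k k' : Fin n → ℕ}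
    (hk : StrictAnti k) (hk' : StrictAnti k') :
    ∫ x in unitCube (Fin n),
        cosMinus n (fun i => (k i : ℝ) + 1 / 2) x * cosMinus n (fun i => (k' i : ℝ) + 1 / 2) x
      = n.factorial * (((2 : ℝ) ^ n)⁻¹ * if k = k' then 1 else 0) := by
  have hmatch : ∀ σ τ : Equiv.Perm (Fin n), (∀ i, k (σ i) = k' (τ i)) ↔ σ = τ ∧ k = k' :=
    fun σ τ => funext_iff.symm.trans (hk.comp_perm_eq_comp_perm_iff hk')
  rw [integral_unitCube_cosMinus_mul_cosMinus]
  simp only [integral_cos_halfInt_mul_cos_halfInt, prod_ite_zero, prod_const, card_univ,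
    Fintype.card_fin, mem_univ, forall_const, hmatch]
  by_cases hkk : k = k'
  · simp [hkk, Int.cast_units_mul_self, Fintype.card_perm, inv_pow]
  · simp [hkk]

theorem continuous_orthogonality_antisym_halfinteger_general (n : ℕ)
    (k k' : Fin n → ℕ)
    (hk : ∀ i j : Fin n, i < j → k j < k i)
    (hk' : ∀ i j : Fin n, i < j → k' j < k' i) :
    ∫ x in Fdom n,
        cosMinus n (fun i => (k i : ℝ) + 1 / 2) x *
          cosMinus n (fun i => (k' i : ℝ) + 1 / 2) x
      = ((2 : ℝ) ^ n)⁻¹ * (if k = k' then (1 : ℝ) else 0) := by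
  rw [← mul_right_inj' (Nat.cast_ne_zero.mpr n.factorial_ne_zero : (n.factorial : ℝ) ≠ 0),
    ← integral_unitCube_eq_factorial_mul_integral_Fdom
      (Continuous.integrableOn_unitCube (by fun_prop))
      (cosMinus_mul_cosMinus_comp_perm n _ _),
    integral_unitCube_cosMinus_halfInt_mul_cosMinus_halfInt hk hk']

theorem continuous_orthogonality_antisym_halfinteger (n : ℕ) (hn : 1 ≤ n)
    (k k' : Fin n → ℕ)
    (hk : ∀ i j : Fin n, i < j → k j < k i)
    (hk' : ∀ i j : Fin n, i < j → k' j < k' i) :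
    ∫ x in Fdom n,
        cosMinus n (fun i => (k i : ℝ) + 1 / 2) x *
          cosMinus n (fun i => (k' i : ℝ) + 1 / 2) x
      = ((2 : ℝ) ^ n)⁻¹ * (if k = k' then (1 : ℝ) else 0) :=
  continuous_orthogonality_antisym_halfinteger_general n k k' hk hk'
end

section
/- (SMDCT V discrete orthogonality) Let N, n ≥ 1 and let k, k' ∈ D_N^+, i.e., integer vectors with N−1 ≥ k_1 ≥ k_2 ≥ … ≥ k_n ≥ 0 and N−1 ≥ k'_1 ≥ … ≥ k'_n ≥ 0. Then Σ_{r ∈ D_N^+} (∏_{i=1}^n c_{r_i}) · H_r^{−1} · cos⁺_k(2r_1/(2N−1), …, 2r_n/(2N−1)) · cos⁺_{k'}(2r_1/(2N−1), …, 2r_n/(2N−1)) = (H_k / d_k) · ((2N−1)/4)^n · δ_{k,k'}. -/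
open Real Finset

/-- The coefficient `c_r`: `1/2` if `r = 0` or `r = N`, and `1` otherwise. -/
noncomputable def cc (N r : ℕ) : ℝ := if r = 0 ∨ r = N then 1 / 2 else 1

/-- `H_k`, the order of the stabilizer of `k` under the permutation action of `S_n`
(where `σ(k)_i = k_{σ(i)}`, i.e. `σ(k) = k ∘ σ`). -/
def Hstab {n : ℕ} {α : Type*} [DecidableEq α] (k : Fin n → α) : ℕ :=
  (Finset.univ.filter fun σ : Equiv.Perm (Fin n) => k ∘ σ = k).card

/-!
The summand is invariant under permuting `r`, and the sorted tuples are exactly the orbit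
representatives, an orbit of `d` having `n! / H_d` elements; so the left side is `1/n!` times the
sum over the full grid `{0,…,N-1}ⁿ`. There, expanding both `cos⁺` gives `(n!)²` product sums, each
of which factors into one-dimensional DCT-V relations
`∑_{x<N} c_x cos(2πax/(2N-1)) cos(2πbx/(2N-1)) = δ_{ab} (2N-1) / (4 c_a)` for `a, b < N`.
These follow from `∑_{s<M} cos(2πms/M) = M·[M ∣ m]`, halved via the symmetry `s ↦ M - s` with
`M = 2N - 1`. Only the pairs `(σ, τ)` with `k ∘ σ = k' ∘ τ` survive, and for sorted `k, k'` there
are `δ_{kk'} n! H_k` of them.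
-/

open scoped Nat

theorem sum_range_cos_two_pi_int_mul_div {M : ℕ} (hM : M ≠ 0) (m : ℤ) :
    ∑ s ∈ range M, cos (2 * π * m * s / M) = if (M : ℤ) ∣ m then (M : ℝ) else 0 := by
  have hζ := Complex.isPrimitiveRoot_exp M hM
  have hz : ∀ s : ℕ,
      ((Complex.exp (2 * π * Complex.I / M) ^ m) ^ s).re = cos (2 * π * m * s / M) := fun s => by
    rw [← Complex.exp_int_mul, ← Complex.exp_nat_mul, ← Complex.exp_ofReal_mul_I_re]
    push_cast
    ring_nf
  simp_rw [← hz, ← Complex.re_sum]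
  generalize Complex.exp (2 * π * Complex.I / M) = ζ at hζ
  split_ifs with hdvd
  · simp [(hζ.zpow_eq_one_iff_dvd m).2 hdvd]
  · have hz1 : ζ ^ m ≠ 1 := fun h => hdvd ((hζ.zpow_eq_one_iff_dvd m).1 h)
    have hzM : (ζ ^ m) ^ M = 1 := by
      rw [← zpow_natCast, ← zpow_mul, mul_comm, zpow_mul, zpow_natCast, hζ.pow_eq_one,
        one_zpow]
    simp [geom_sum_eq hz1, hzM]

theorem sum_range_eq_two_mul_sum_sub_of_add_eq {M N : ℕ} (hM : M + 1 = 2 * N) (f : ℕ → ℝ)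
    (hf : ∀ s t, s + t = M → f s = f t) :
    ∑ s ∈ range M, f s = 2 * ∑ x ∈ range N, f x - f 0 := by
  have hreflect : ∑ i ∈ range N, f (N + i) = ∑ i ∈ range N, f (N - 1 - i) :=
    sum_congr rfl fun i hi => hf _ _ (by simp at hi; omega)
  have h2N : ∑ s ∈ range (M + 1), f s = 2 * ∑ x ∈ range N, f x := by
    rw [hM, two_mul, sum_range_add, hreflect, sum_range_reflect, two_mul]
  rw [sum_range_succ, hf M 0 (by omega)] at h2N
  linarith

theorem sum_fin_cc_mul {N : ℕ} (hN : N ≠ 0) (f : ℕ → ℝ) :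
    ∑ x : Fin N, cc N x * f x = ∑ x ∈ range N, f x - f 0 / 2 := by
  have h0 : 0 ∈ range N := mem_range.2 (Nat.pos_of_ne_zero hN)
  have hcc : ∀ x ∈ (range N).erase 0, cc N x * f x = f x := fun x hx => by
    simp only [mem_erase, mem_range] at hx
    simp [cc, hx.1, hx.2.ne]
  rw [Fin.sum_univ_eq_sum_range (fun x => cc N x * f x), ← sum_erase_add _ _ h0,
    ← sum_erase_add _ _ h0, sum_congr rfl hcc]
  simp only [cc, true_or, if_true]
  ring

theorem sum_fin_cc_mul_cos {M N : ℕ} (hM : M + 1 = 2 * N) (m : ℤ) :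
    ∑ x : Fin N, cc N x * cos (2 * π * m * x / M) =
      if (M : ℤ) ∣ m then (M : ℝ) / 2 else 0 := by
  have hMR : (M : ℝ) ≠ 0 := by norm_cast; omega
  have hfold := sum_range_eq_two_mul_sum_sub_of_add_eq hM (fun s => cos (2 * π * m * s / M))
    fun s t hst => by
      rw [show (t : ℝ) = M - s by rw [← hst]; push_cast; ring, ← cos_neg,
        ← cos_add_int_mul_two_pi _ m]
      congr 1
      field_simp
      ring
  have hcc := sum_fin_cc_mul (N := N) (by omega) (fun s => cos (2 * π * m * s / M))
  simp only [sum_range_cos_two_pi_int_mul_div (show M ≠ 0 by omega)] at hfold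
  simp only [Nat.cast_zero, mul_zero, zero_div, cos_zero] at hfold hcc
  rw [hcc]
  split_ifs at hfold ⊢ <;> linarith

theorem sum_fin_cc_mul_cos_mul_cos {N a b : ℕ} (ha : a < N) (hb : b < N) :
    ∑ x : Fin N, cc N x *
        (cos (π * a * (2 * x / (2 * N - 1))) * cos (π * b * (2 * x / (2 * N - 1)))) =
      if a = b then (2 * N - 1) / 4 * (cc N a)⁻¹ else 0 := by
  obtain ⟨M, hM⟩ : ∃ M, M + 1 = 2 * N := ⟨2 * N - 1, by omega⟩
  have hMR : (2 * N - 1 : ℝ) = M := by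
    rw [sub_eq_iff_eq_add]; exact_mod_cast hM.symm
  have hsplit : ∑ x : Fin N, cc N x *
        (cos (π * a * (2 * x / (2 * N - 1))) * cos (π * b * (2 * x / (2 * N - 1)))) =
      (∑ x : Fin N, cc N x * cos (2 * π * ((a - b : ℤ) : ℝ) * x / M) +
        ∑ x : Fin N, cc N x * cos (2 * π * ((a + b : ℤ) : ℝ) * x / M)) / 2 := by
    rw [← sum_add_distrib, sum_div]
    refine sum_congr rfl fun x _ => ?_
    rw [hMR,
      show 2 * π * ((a - b : ℤ) : ℝ) * x / M = π * a * (2 * x / M) - π * b * (2 * x / M) by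
        push_cast; ring,
      show 2 * π * ((a + b : ℤ) : ℝ) * x / M = π * a * (2 * x / M) + π * b * (2 * x / M) by
        push_cast; ring,
      cos_sub, cos_add]
    ring
  rw [hsplit, sum_fin_cc_mul_cos hM, sum_fin_cc_mul_cos hM]
  have hsub : (M : ℤ) ∣ (a - b : ℤ) ↔ a = b :=
    ⟨fun h => by have := Int.eq_zero_of_abs_lt_dvd h (abs_lt.2 ⟨by omega, by omega⟩); omega,
      fun h => by simp [h]⟩
  have hadd : (M : ℤ) ∣ (a + b : ℤ) ↔ a = 0 ∧ b = 0 :=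
    ⟨fun h => by have := Int.eq_zero_of_abs_lt_dvd h (abs_lt.2 ⟨by omega, by omega⟩); omega,
      fun h => by simp [h]⟩
  have hccN : cc N a = if a = 0 then 1 / 2 else 1 := by simp [cc, ha.ne]
  rw [if_congr hsub rfl rfl, if_congr hadd rfl rfl, hMR, hccN]
  by_cases hab : a = b
  · subst hab
    by_cases ha0 : a = 0 <;> simp [ha0] <;> ring
  · have : ¬(a = 0 ∧ b = 0) := by omega
    simp [hab, this]

section Rearrangement

variable {n : ℕ} {α : Type*}

theorem Hstab_pos [DecidableEq α] (k : Fin n → α) : 0 < Hstab k :=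
  card_pos.2 ⟨1, by simp⟩

theorem card_filter_comp_eq_comp_eq_Hstab [DecidableEq α] (d : Fin n → α)
    (σ₀ : Equiv.Perm (Fin n)) :
    #{σ : Equiv.Perm (Fin n) | d ∘ σ = d ∘ σ₀} = Hstab d := by
  refine (card_equiv (Equiv.mulRight σ₀⁻¹) fun σ => ?_).trans rfl
  simp only [mem_filter, mem_univ, true_and, Equiv.coe_mulRight, Equiv.Perm.coe_mul]
  constructor
  · intro h; rw [← Function.comp_assoc, h]; ext; simp
  · intro h; conv_rhs => rw [← h]
    ext; simp

variable [LinearOrder α]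

noncomputable def sortDesc (r : Fin n → α) : Fin n → α :=
  r ∘ Tuple.sort (OrderDual.toDual ∘ r)

theorem antitone_sortDesc (r : Fin n → α) : Antitone (sortDesc r) :=
  fun _ _ hij => Tuple.monotone_sort (OrderDual.toDual ∘ r) hij

theorem sortDesc_eq_self {r : Fin n → α} (h : Antitone r) : sortDesc r = r := by
  have hmono : Monotone (OrderDual.toDual ∘ r) := fun _ _ hij => h hij
  simp [sortDesc, Tuple.sort_eq_refl_iff_monotone.2 hmono]

theorem sortDesc_comp_perm (r : Fin n → α) (σ : Equiv.Perm (Fin n)) :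
    sortDesc (r ∘ σ) = sortDesc r :=
  funext fun i => congrFun (Tuple.comp_perm_comp_sort_eq_comp_sort (f := OrderDual.toDual ∘ r)) i

theorem exists_perm_eq_sortDesc_comp (r : Fin n → α) :
    ∃ σ : Equiv.Perm (Fin n), r = sortDesc r ∘ σ :=
  ⟨(Tuple.sort (OrderDual.toDual ∘ r))⁻¹, by ext; simp [sortDesc]⟩

theorem sortDesc_eq_iff {r d : Fin n → α} (hd : Antitone d) :
    sortDesc r = d ↔ ∃ σ : Equiv.Perm (Fin n), d ∘ σ = r := by
  constructor
  · rintro rfl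
    obtain ⟨σ, hσ⟩ := exists_perm_eq_sortDesc_comp r
    exact ⟨σ, hσ.symm⟩
  · rintro ⟨σ, rfl⟩
    rw [sortDesc_comp_perm, sortDesc_eq_self hd]

theorem card_filter_sortDesc_eq_mul_Hstab [Fintype α] [DecidableEq α] {d : Fin n → α}
    (hd : Antitone d) : #{r | sortDesc r = d} * Hstab d = n ! := by
  have horbit : ({r | sortDesc r = d} : Finset (Fin n → α)) =
      univ.image fun σ : Equiv.Perm (Fin n) => d ∘ σ := by
    ext r; simp [sortDesc_eq_iff hd]
  have hfact : n ! = #(univ : Finset (Equiv.Perm (Fin n))) := by simp [Fintype.card_perm]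
  rw [horbit, hfact, card_eq_sum_card_image (fun σ : Equiv.Perm (Fin n) => d ∘ σ) univ,
    ← sum_const_nat fun r hr => ?_]
  obtain ⟨σ₀, -, rfl⟩ := mem_image.1 hr
  exact card_filter_comp_eq_comp_eq_Hstab d σ₀

theorem sum_inv_Hstab_mul_of_comp_perm [Fintype α] [DecidableEq α] {s : Finset (Fin n → α)}
    (hs : ∀ r, r ∈ s ↔ Antitone r) (F : (Fin n → α) → ℝ)
    (hF : ∀ r (σ : Equiv.Perm (Fin n)), F (r ∘ σ) = F r) :
    ∑ d ∈ s, (Hstab d : ℝ)⁻¹ * F d = (n ! : ℝ)⁻¹ * ∑ r, F r := by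
  have hfiber : ∑ r, F r = ∑ d ∈ s, (#{r | sortDesc r = d} : ℝ) * F d := by
    rw [← sum_fiberwise_of_maps_to (g := sortDesc) fun r _ => (hs _).2 (antitone_sortDesc r)]
    refine sum_congr rfl fun d _ => ?_
    rw [← nsmul_eq_mul, ← sum_const]
    refine sum_congr rfl fun r hr => ?_
    obtain ⟨σ, hσ⟩ := exists_perm_eq_sortDesc_comp r
    rw [hσ, hF, (mem_filter.1 hr).2]
  rw [hfiber, mul_sum]
  refine sum_congr rfl fun d hd => ?_
  have hcard := card_filter_sortDesc_eq_mul_Hstab ((hs d).1 hd)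
  have hH : (Hstab d : ℝ) ≠ 0 := by exact_mod_cast (Hstab_pos d).ne'
  have hcardR : (#{r | sortDesc r = d} : ℝ) = n ! / Hstab d := by
    rw [eq_div_iff hH]; exact_mod_cast hcard
  rw [hcardR]
  field_simp

theorem card_comp_perm_eq_comp_perm [DecidableEq α] {k k' : Fin n → α} (hk : Antitone k)
    (hk' : Antitone k') :
    #{p : Equiv.Perm (Fin n) × Equiv.Perm (Fin n) | k ∘ p.1 = k' ∘ p.2} =
      if k = k' then n ! * Hstab k else 0 := by
  split_ifs with hkk
  · subst hkk
    calc #{p : Equiv.Perm (Fin n) × Equiv.Perm (Fin n) | k ∘ p.1 = k ∘ p.2}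
        = ∑ σ : Equiv.Perm (Fin n), #{τ : Equiv.Perm (Fin n) | k ∘ τ = k ∘ σ} := by
          simp only [card_filter, Fintype.sum_prod_type, eq_comm]
      _ = n ! * Hstab k := by simp [card_filter_comp_eq_comp_eq_Hstab, Fintype.card_perm]
  · refine card_eq_zero.2 (filter_eq_empty_iff.2 fun p _ h => hkk ?_)
    rw [← sortDesc_eq_self hk, ← sortDesc_eq_self hk', ← sortDesc_comp_perm k p.1,
      ← sortDesc_comp_perm k' p.2, h]

end Rearrangement

theorem cosPlus_comp_perm (n : ℕ) (lam x : Fin n → ℝ) (σ : Equiv.Perm (Fin n)) :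
    cosPlus n lam (x ∘ σ) = cosPlus n lam x := by
  refine Fintype.sum_equiv (Equiv.mulRight σ⁻¹) _ _ fun τ => ?_
  conv_rhs => rw [← Equiv.prod_comp σ]
  simp

theorem cosPlus_mul_cosPlus (n : ℕ) (lam mu x : Fin n → ℝ) :
    cosPlus n lam x * cosPlus n mu x = ∑ σ : Equiv.Perm (Fin n), ∑ τ : Equiv.Perm (Fin n),
      ∏ i, (cos (π * lam (σ i) * x i) * cos (π * mu (τ i) * x i)) := by
  simp only [cosPlus, sum_mul_sum, prod_mul_distrib]

noncomputable def smdctNode {n : ℕ} (N : ℕ) (r : Fin n → Fin N) : Fin n → ℝ :=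
  fun i => 2 * ((r i : ℕ) : ℝ) / (2 * N - 1)

theorem smdctNode_comp_perm {n N : ℕ} (r : Fin n → Fin N) (σ : Equiv.Perm (Fin n)) :
    smdctNode N (r ∘ σ) = smdctNode N r ∘ σ :=
  rfl

theorem sum_prod_cc_mul_cos_mul_cos {n N : ℕ} {a b : Fin n → ℕ} (ha : ∀ i, a i < N)
    (hb : ∀ i, b i < N) :
    ∑ r : Fin n → Fin N, ∏ i, cc N (r i) *
        (cos (π * a i * smdctNode N r i) * cos (π * b i * smdctNode N r i)) =
      if a = b then ((2 * N - 1) / 4) ^ n / ∏ i, cc N (a i) else 0 := by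
  simp only [smdctNode]
  rw [← Fintype.prod_sum fun i (x : Fin N) =>
    cc N x * (cos (π * a i * (2 * x / (2 * N - 1))) * cos (π * b i * (2 * x / (2 * N - 1))))]
  simp only [sum_fin_cc_mul_cos_mul_cos (ha _) (hb _), Fintype.prod_ite_zero,
    ← funext_iff]
  rw [prod_mul_distrib, prod_const, card_univ, Fintype.card_fin, prod_inv_distrib,
    ← div_eq_mul_inv]

theorem sum_prod_cc_mul_cosPlus_mul_cosPlus {n N : ℕ} {k k' : Fin n → ℕ} (hk : ∀ i, k i < N)
    (hk' : ∀ i, k' i < N) :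
    ∑ r : Fin n → Fin N, (∏ i, cc N (r i)) *
        cosPlus n (fun i => (k i : ℝ)) (smdctNode N r) *
          cosPlus n (fun i => (k' i : ℝ)) (smdctNode N r) =
      #{p : Equiv.Perm (Fin n) × Equiv.Perm (Fin n) | k ∘ p.1 = k' ∘ p.2} *
        (((2 * N - 1) / 4) ^ n / ∏ i, cc N (k i)) := by
  calc _ = ∑ r : Fin n → Fin N, ∑ σ : Equiv.Perm (Fin n), ∑ τ : Equiv.Perm (Fin n), ∏ i,
          cc N (r i) * (cos (π * (k ∘ σ) i * smdctNode N r i) *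
            cos (π * (k' ∘ τ) i * smdctNode N r i)) := by
        refine sum_congr rfl fun r _ => ?_
        rw [mul_assoc, cosPlus_mul_cosPlus]
        simp only [mul_sum, prod_mul_distrib, Function.comp_apply]
    _ = ∑ σ : Equiv.Perm (Fin n), ∑ τ : Equiv.Perm (Fin n),
          if k ∘ σ = k' ∘ τ then ((2 * N - 1) / 4) ^ n / ∏ i, cc N (k i) else 0 := by
        rw [sum_comm]
        refine sum_congr rfl fun σ _ => ?_
        rw [sum_comm]
        refine sum_congr rfl fun τ _ => ?_
        rw [sum_prod_cc_mul_cos_mul_cos (a := k ∘ σ) (b := k' ∘ τ) (fun _ => hk _)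
          (fun _ => hk' _)]
        simp only [Function.comp_apply, Equiv.prod_comp σ fun i => cc N (k i)]
    _ = _ := by
        simp only [card_filter, Fintype.sum_prod_type, Nat.cast_sum, sum_mul, Nat.cast_ite,
          Nat.cast_one, Nat.cast_zero, ite_mul, one_mul, zero_mul]

theorem SMDCT_V_orthogonality_general (n N : ℕ) (hN : 1 ≤ N)
    (k k' : Fin n → ℕ)
    (hk : ∀ i j : Fin n, i ≤ j → k j ≤ k i) (hkb : ∀ i, k i ≤ N - 1)
    (hk' : ∀ i j : Fin n, i ≤ j → k' j ≤ k' i) (hk'b : ∀ i, k' i ≤ N - 1) :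
    ∑ r ∈ Finset.univ.filter
        (fun r : Fin n → Fin N => ∀ i j : Fin n, i ≤ j → (r j : ℕ) ≤ (r i : ℕ)),
      (∏ i : Fin n, cc N (r i)) * ((Hstab r : ℝ))⁻¹ *
        cosPlus n (fun i => (k i : ℝ))
          (fun i => 2 * ((r i : ℕ) : ℝ) / (2 * N - 1)) *
        cosPlus n (fun i => (k' i : ℝ))
          (fun i => 2 * ((r i : ℕ) : ℝ) / (2 * N - 1))
      = (Hstab k : ℝ) / (∏ i : Fin n, cc N (k i)) * ((2 * (N : ℝ) - 1) / 4) ^ n *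
          (if k = k' then (1 : ℝ) else 0) := by
  have hkN : ∀ i, k i < N := fun i => by have := hkb i; omega
  have hk'N : ∀ i, k' i < N := fun i => by have := hk'b i; omega
  set F : (Fin n → Fin N) → ℝ := fun r => (∏ i, cc N (r i)) *
    cosPlus n (fun i => (k i : ℝ)) (smdctNode N r) *
      cosPlus n (fun i => (k' i : ℝ)) (smdctNode N r)
  have hF : ∀ r (σ : Equiv.Perm (Fin n)), F (r ∘ σ) = F r := fun r σ => by
    simp only [F, smdctNode_comp_perm, cosPlus_comp_perm, Function.comp_apply,
      Equiv.prod_comp σ fun i => cc N (r i)]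
  calc _ = ∑ r ∈ _, (Hstab r : ℝ)⁻¹ * F r := sum_congr rfl fun r _ => by
        simp only [F]; unfold smdctNode; ring
    _ = (n ! : ℝ)⁻¹ * ∑ r, F r :=
      sum_inv_Hstab_mul_of_comp_perm (fun r => by simp [Antitone]) F hF
    _ = _ := by
      rw [sum_prod_cc_mul_cosPlus_mul_cosPlus hkN hk'N,
        card_comp_perm_eq_comp_perm (fun _ _ h => hk _ _ h) (fun _ _ h => hk' _ _ h)]
      split_ifs
      · have hfact : (n ! : ℝ) ≠ 0 := by positivity
        push_cast
        field_simp
      · simp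

theorem SMDCT_V_orthogonality (n N : ℕ) (hn : 1 ≤ n) (hN : 1 ≤ N)
    (k k' : Fin n → ℕ)
    (hk : ∀ i j : Fin n, i ≤ j → k j ≤ k i) (hkb : ∀ i, k i ≤ N - 1)
    (hk' : ∀ i j : Fin n, i ≤ j → k' j ≤ k' i) (hk'b : ∀ i, k' i ≤ N - 1) :
    ∑ r ∈ Finset.univ.filter
        (fun r : Fin n → Fin N => ∀ i j : Fin n, i ≤ j → (r j : ℕ) ≤ (r i : ℕ)),
      (∏ i : Fin n, cc N (r i)) * ((Hstab r : ℝ))⁻¹ *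
        cosPlus n (fun i => (k i : ℝ))
          (fun i => 2 * ((r i : ℕ) : ℝ) / (2 * N - 1)) *
        cosPlus n (fun i => (k' i : ℝ))
          (fun i => 2 * ((r i : ℕ) : ℝ) / (2 * N - 1))
      = (Hstab k : ℝ) / (∏ i : Fin n, cc N (k i)) * ((2 * (N : ℝ) - 1) / 4) ^ n *
          (if k = k' then (1 : ℝ) else 0) :=
  SMDCT_V_orthogonality_general n N hN k k' hk hkb hk' hk'b
end
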